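/- arXiv:2409.03903 — 3 statements merged into one kernel-verified Lean document; each statement's English description precedes it below -/
import Mathlib

section
/- Let q ≥ 2 and k ≥ 2 be integers and let I be a maximization instance of k CSP-q with n variables and opt(I) ≠ wor(I) in which every constraint has arity exactly k and every constraint function is balanced (k−1)-wise independent. Then: (1) for every x ∈ Σ_q^n, Σ over all y ∈ Σ_q^n with d_H(x,y) = 1 of v(I,y) equals q·k·E[v(I,X)] + ((q−1)·n − q·k)·v(I,x); (2) every x ∈ Σ_q^n satisfying v(I,x) ≥ v(I,y) for all y ∈ B^1(x) (a local optimum with respect to B^1) satisfies v(I,x) ≥ E[v(I,X)], so its differential ratio is at least the average differential ratio of I; (3) if moreover (q−1)·n ≥ q·k, then for every x ∈ Σ_q^n, max_{y∈B^1(x)} v(I,y) ≥ (qk/((q−1)n))·E[v(I,X)] + (1 − qk/((q−1)n))·wor(I), so the best differential ratio over B^1(x) is at least qk/((q−1)n) times the average differential ratio of I. -/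
/-- An instance of the (maximization) problem `k CSP-q` with `n` variables:
`m` weighted constraints, where constraint `i` has positive weight `w i`,
arity `arity i ≤ k`, a strictly increasing tuple `idx i` of indices of the
variables it depends on, and a constraint function `P i : Σ_q^{arity i} → ℝ`. -/
structure CSPInstance (q k n : ℕ) where
  m : ℕ
  w : Fin m → ℝ
  w_pos : ∀ i, 0 < w i
  arity : Fin m → ℕ
  arity_le : ∀ i, arity i ≤ k
  idx : (i : Fin m) → Fin (arity i) → Fin n
  idx_mono : ∀ i, StrictMono (idx i)
  P : (i : Fin m) → ((Fin (arity i) → Fin q) → ℝ)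

namespace CSPInstance

variable {q k n : ℕ}

/-- The objective value `v(I, x)` of a solution `x ∈ Σ_q^n`. -/
def value (I : CSPInstance q k n) (x : Fin n → Fin q) : ℝ :=
  ∑ i : Fin I.m, I.w i * I.P i (fun s => x (I.idx i s))

/-- `opt(I)`, the best (maximum) objective value. -/
noncomputable def opt (I : CSPInstance q k n) : ℝ := sSup (Set.range I.value)

/-- `wor(I)`, the worst (minimum) objective value. -/
noncomputable def wor (I : CSPInstance q k n) : ℝ := sInf (Set.range I.value)

/-- `E[v(I,X)]`, the average objective value over all `q^n` solutions. -/
noncomputable def avg (I : CSPInstance q k n) : ℝ :=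
  (∑ x : Fin n → Fin q, I.value x) / (q : ℝ) ^ n

/-- A strong coloring of `I` with `ν` colors: an assignment of colors to variables such
that the support of each constraint meets each color class in at most one index. -/
def StrongColoring (I : CSPInstance q k n) (ν : ℕ) : Prop :=
  ∃ c : Fin n → Fin ν, ∀ i : Fin I.m, Function.Injective (fun s => c (I.idx i s))

end CSPInstance

/-- A function `P : Σ_q^κ → ℝ` is balanced `t`-wise independent: for every `t` indices
`j 0 < ... < j (t-1)` and every `v ∈ Σ_q^t`, the average of `P` over the slice
`{y : y ∘ j = v}` equals the average of `P` over `Σ_q^κ` (stated in a fraction-free way: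
the slice has `q^(κ-t)` elements and the full cube has `q^κ` elements). -/
def BalancedTwise (q t : ℕ) {κ : ℕ} (P : (Fin κ → Fin q) → ℝ) : Prop :=
  ∀ j : Fin t → Fin κ, StrictMono j → ∀ v : Fin t → Fin q,
    (∑ y ∈ Finset.univ.filter (fun y : Fin κ → Fin q => ∀ s, y (j s) = v s), P y) * (q : ℝ) ^ t
      = ∑ y : Fin κ → Fin q, P y


/-!
Around any `x`, the sum of `f` over the Hamming sphere of radius one is
`∑ j, ∑ a, f (update x j a) - n • f x`. For a single constraint `P` read on the coordinates
`e 0, …, e (k-1)`, a direction `j` outside the support leaves `P` unchanged and contributes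
`q • P x`; a direction inside the support sums `P` along a line of its cube, and balanced
`(k-1)`-wise independence makes every such line sum equal to `q` times the mean of `P`.
Summing over the `n` directions and then over the constraints gives (1). Since the sphere has
`(q-1) n` points, comparing (1) with `(q-1) n` times the value at a local optimum gives (2), and
with `(q-1) n` times the best value on the sphere, using `wor ≤ v(x)`, gives (3).
-/

open Finset Function

section HammingSphere

theorem hammingDist_eq_one_iff {ι α : Type*} [Fintype ι] [DecidableEq α] {x y : ι → α} :
    hammingDist x y = 1 ↔ ∃ j, x j ≠ y j ∧ ∀ i, x i ≠ y i → i = j := by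
  simp [hammingDist, card_eq_one, eq_singleton_iff_unique_mem]

variable {ι α : Type*} [Fintype ι] [DecidableEq ι] [Fintype α]

theorem sum_sum_update {M : Type*} [AddCommMonoid M] (f : (ι → α) → M) (j : ι) :
    ∑ x, ∑ a, f (update x j a) = Fintype.card α • ∑ x, f x := by
  let σ : Equiv.Perm ((ι → α) × α) :=
    Involutive.toPerm (fun p => (update p.1 j p.2, p.1 j)) fun p => by simp
  calc ∑ x, ∑ a, f (update x j a) = ∑ p : (ι → α) × α, f (σ p).1 :=
        (Fintype.sum_prod_type' _).symm
    _ = ∑ p : (ι → α) × α, f p.1 := Equiv.sum_comp σ fun p => f p.1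
    _ = Fintype.card α • ∑ x, f x := by simp [Fintype.sum_prod_type, smul_sum]

variable [DecidableEq α]

theorem sum_hammingDist_eq_one {M : Type*} [AddCommMonoid M] (f : (ι → α) → M) (x : ι → α) :
    ∑ y with hammingDist x y = 1, f y = ∑ j, ∑ a ∈ univ.erase (x j), f (update x j a) := by
  rw [sum_sigma']
  refine (sum_nbij (fun p : (_ : ι) × α => update x p.1 p.2) ?_ ?_ ?_ fun _ _ => rfl).symm
  · rintro ⟨j, a⟩ h
    simp only [mem_sigma, mem_univ, mem_erase, true_and, mem_filter] at h ⊢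
    refine hammingDist_eq_one_iff.2 ⟨j, by simpa [eq_comm] using h, fun i hi => ?_⟩
    by_contra hij
    exact hi (update_of_ne hij a x).symm
  · rintro ⟨j, a⟩ h ⟨j', a'⟩ _ heq
    simp only [coe_sigma, Set.mem_sigma_iff, coe_univ, Set.mem_univ, coe_erase,
      Set.mem_sdiff, Set.mem_singleton_iff, true_and] at h
    have hj : j = j' := by
      by_contra hj
      exact h (by simpa [update_of_ne hj] using congrFun heq j)
    subst hj
    simpa using congrFun heq j
  · intro y hy
    obtain ⟨j, hj, hunique⟩ := hammingDist_eq_one_iff.1 (by simpa using hy)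
    refine ⟨⟨j, y j⟩, by simpa [eq_comm] using hj, ?_⟩
    refine (eq_update_iff.2 ⟨rfl, fun i hi => ?_⟩).symm
    by_contra hne
    exact hi (hunique i (Ne.symm hne))

theorem sum_hammingDist_eq_one_eq_sub {M : Type*} [AddCommGroup M] (f : (ι → α) → M)
    (x : ι → α) :
    ∑ y with hammingDist x y = 1, f y =
      ∑ j, ∑ a, f (update x j a) - Fintype.card ι • f x := by
  simp only [sum_hammingDist_eq_one, sum_erase_eq_sub (mem_univ _), update_eq_self,
    sum_sub_distrib, sum_const, card_univ]

theorem card_hammingDist_eq_one (x : ι → α) :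
    #{y | hammingDist x y = 1} = Fintype.card ι * (Fintype.card α - 1) := by
  rw [card_eq_sum_ones, sum_hammingDist_eq_one]
  simp [card_erase_of_mem]

theorem sum_hammingDist_eq_one_of_sum_update_eq [Nonempty α] (f : (ι → α) → ℝ) (S : Finset ι)
    (c : ℝ) (hS : ∀ j ∈ S, ∀ x, ∑ a, f (update x j a) = c)
    (hSc : ∀ j ∉ S, ∀ x a, f (update x j a) = f x) (x : ι → α) :
    ∑ y with hammingDist x y = 1, f y =
      Fintype.card α * #S * ((∑ x, f x) / Fintype.card α ^ Fintype.card ι)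
        + ((Fintype.card α - 1) * Fintype.card ι - Fintype.card α * #S) * f x := by
  have hc : ∀ j ∈ S, c = Fintype.card α * ((∑ x, f x) / Fintype.card α ^ Fintype.card ι) := by
    intro j hj
    have h := sum_sum_update f j
    simp only [hS j hj, sum_const, card_univ, Fintype.card_fun, nsmul_eq_mul] at h
    push_cast at h
    field_simp
    linarith
  have hin : ∑ j ∈ S, ∑ a, f (update x j a) = #S * c := by
    simp [sum_congr rfl fun j hj => hS j hj x]
  have hout : ∑ j ∈ Sᶜ, ∑ a, f (update x j a) =
      (Fintype.card ι - #S) * (Fintype.card α * f x) := by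
    simp [sum_congr rfl fun j hj => sum_congr rfl fun a _ => hSc j (mem_compl.1 hj) x a,
      card_compl, Nat.cast_sub (card_le_univ S)]
  rw [sum_hammingDist_eq_one_eq_sub, ← sum_add_sum_compl S, hin, hout, nsmul_eq_mul]
  -- `hc` pins `c` down only when `S` is nonempty; otherwise `#S * c = 0` anyway.
  rcases S.eq_empty_or_nonempty with rfl | ⟨j, hj⟩
  · simp
    ring
  · rw [hc j hj]
    ring

theorem le_of_sum_hammingDist_eq_one_of_forall_le {g : (ι → α) → ℝ} {x : ι → α} {A a D : ℝ}
    (ha : 0 < a) (hcard : (#{y | hammingDist x y = 1} : ℝ) = D)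
    (hsum : ∑ y with hammingDist x y = 1, g y = a * A + (D - a) * g x)
    (hmax : ∀ y, hammingDist x y ≤ 1 → g y ≤ g x) : A ≤ g x := by
  have hle : ∑ y with hammingDist x y = 1, g y ≤ D * g x := by
    rw [← hcard, ← nsmul_eq_mul, ← sum_const]
    exact sum_le_sum fun y hy => hmax y (mem_filter.1 hy).2.le
  exact le_of_mul_le_mul_left (by linarith) ha

theorem exists_hammingDist_le_one_le {g : (ι → α) → ℝ} {x : ι → α} {A W a D : ℝ}
    (hD : 0 < D) (haD : a ≤ D) (hcard : (#{y | hammingDist x y = 1} : ℝ) = D)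
    (hsum : ∑ y with hammingDist x y = 1, g y = a * A + (D - a) * g x) (hW : W ≤ g x) :
    ∃ y, hammingDist x y ≤ 1 ∧ a / D * A + (1 - a / D) * W ≤ g y := by
  have hne : ({y | hammingDist x y = 1} : Finset (ι → α)).Nonempty := by
    rw [← card_pos]
    exact_mod_cast hcard ▸ hD
  have hmix : D * (a / D * A + (1 - a / D) * W) = a * A + (D - a) * W := by
    field_simp
  obtain ⟨y, hy, hle⟩ := exists_le_of_sum_le hne
    (f := fun _ => a / D * A + (1 - a / D) * W) (g := g) (by
      rw [sum_const, nsmul_eq_mul, hcard, hsum, hmix]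
      nlinarith [mul_le_mul_of_nonneg_left hW (sub_nonneg.2 haD)])
  exact ⟨y, (mem_filter.1 hy).2.le, hle⟩

end HammingSphere

theorem BalancedTwise.mul_sum_update {q κ : ℕ} {P : (Fin κ → Fin q) → ℝ}
    (hP : BalancedTwise q (κ - 1) P) (z : Fin κ → Fin q) (s : Fin κ) :
    (q : ℝ) ^ (κ - 1) * ∑ a, P (update z s a) = ∑ y, P y := by
  cases κ with
  | zero => exact s.elim0
  | succ t =>
    rw [Nat.add_sub_cancel] at hP ⊢
    rw [← hP s.succAbove (Fin.strictMono_succAbove s) (fun r => z (s.succAbove r)), mul_comm]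
    congr 1
    refine sum_nbij' (update z s) (fun y => y s) (by simp) (by simp) (by simp) ?_ (by simp)
    intro y hy
    simp only [mem_filter, mem_univ, true_and] at hy
    refine (eq_update_iff.2 ⟨rfl, fun i hi => ?_⟩).symm
    obtain ⟨r, rfl⟩ := Fin.exists_succAbove_eq hi
    exact hy r

theorem sum_hammingDist_eq_one_comp_of_balancedTwise {ι : Type*} [Fintype ι] [DecidableEq ι]
    {q κ : ℕ} [NeZero q] {P : (Fin κ → Fin q) → ℝ} (hP : BalancedTwise q (κ - 1) P)
    {e : Fin κ → ι} (he : Injective e) (x : ι → Fin q) :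
    ∑ y with hammingDist x y = 1, P (fun s => y (e s)) =
      q * κ * ((∑ x : ι → Fin q, P (fun s => x (e s))) / q ^ Fintype.card ι)
        + ((q - 1) * Fintype.card ι - q * κ) * P (fun s => x (e s)) := by
  have h := sum_hammingDist_eq_one_of_sum_update_eq (fun y => P (fun s => y (e s)))
    (univ.map ⟨e, he⟩) ((∑ z, P z) / q ^ (κ - 1)) ?_ ?_ x
  · simpa using h
  · simp only [mem_map, mem_univ, true_and, Embedding.coeFn_mk, forall_exists_index]
    rintro _ s rfl y
    simp only [update_comp_eq_of_injective' y he]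
    rw [eq_div_iff (by simp [NeZero.ne q]), mul_comm, hP.mul_sum_update]
  · intro j hj y a
    simp only [mem_map, mem_univ, true_and, Embedding.coeFn_mk, not_exists] at hj
    simp only [update_of_ne (hj _)]

namespace CSPInstance

variable {q k n : ℕ} (I : CSPInstance q k n)

theorem wor_le_value (x : Fin n → Fin q) : I.wor ≤ I.value x :=
  csInf_le (Set.finite_range _).bddBelow ⟨x, rfl⟩

theorem avg_eq_sum :
    I.avg = ∑ i, I.w i * ((∑ x : Fin n → Fin q, I.P i (fun s => x (I.idx i s))) / q ^ n) := by
  simp only [avg, value]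
  rw [sum_comm, sum_div]
  simp only [← mul_sum, mul_div_assoc]

theorem sum_hammingDist_eq_one_value [NeZero q] (harity : ∀ i, I.arity i = k)
    (hbal : ∀ i, BalancedTwise q (k - 1) (I.P i)) (x : Fin n → Fin q) :
    ∑ y with hammingDist x y = 1, I.value y =
      q * k * I.avg + ((q - 1) * n - q * k) * I.value x := by
  simp only [value]
  rw [sum_comm, avg_eq_sum, mul_sum, mul_sum, ← sum_add_distrib]
  refine sum_congr rfl fun i _ => ?_
  have hbal' : BalancedTwise q (I.arity i - 1) (I.P i) := by
    rw [show I.arity i - 1 = k - 1 by rw [harity i]]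
    exact hbal i
  have hk : (I.arity i : ℝ) = k := by exact_mod_cast harity i
  rw [← mul_sum, sum_hammingDist_eq_one_comp_of_balancedTwise hbal' (I.idx_mono i).injective x,
    hk, Fintype.card_fin]
  ring

end CSPInstance

theorem balanced_Ek_local_search_general
    (q k n : ℕ) (hq : 2 ≤ q) (hk : 2 ≤ k)
    (I : CSPInstance q k n)
    (harity : ∀ i : Fin I.m, I.arity i = k)
    (hbal : ∀ i : Fin I.m, BalancedTwise q (k - 1) (I.P i)) :
    (∀ x : Fin n → Fin q,
      (∑ y ∈ Finset.univ.filter fun y : Fin n → Fin q => hammingDist x y = 1, I.value y) =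
        (q : ℝ) * k * I.avg + (((q : ℝ) - 1) * n - (q : ℝ) * k) * I.value x) ∧
    (∀ x : Fin n → Fin q,
      (∀ y : Fin n → Fin q, hammingDist x y ≤ 1 → I.value y ≤ I.value x) →
        I.avg ≤ I.value x) ∧
    (q * k ≤ (q - 1) * n →
      ∀ x : Fin n → Fin q, ∃ y : Fin n → Fin q, hammingDist x y ≤ 1 ∧
        (q : ℝ) * k / (((q : ℝ) - 1) * n) * I.avg +
            (1 - (q : ℝ) * k / (((q : ℝ) - 1) * n)) * I.wor ≤ I.value y) := by
  have : NeZero q := ⟨by omega⟩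
  have hsphere (x : Fin n → Fin q) :
      (#{y | hammingDist x y = 1} : ℝ) = ((q : ℝ) - 1) * n := by
    rw [card_hammingDist_eq_one]
    simp [Nat.cast_sub (by omega : 1 ≤ q), mul_comm]
  have hsum := I.sum_hammingDist_eq_one_value harity hbal
  have hqk : (0 : ℝ) < q * k := by
    have : (0 : ℝ) < k := by exact_mod_cast (by omega : 0 < k)
    positivity
  refine ⟨hsum, fun x hx => le_of_sum_hammingDist_eq_one_of_forall_le hqk (hsphere x) (hsum x) hx,
    fun hqkn x => ?_⟩
  have hqkn' : (q : ℝ) * k ≤ ((q : ℝ) - 1) * n := by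
    rw [← Nat.cast_one, ← Nat.cast_sub (by omega)]
    exact_mod_cast hqkn
  exact exists_hammingDist_le_one_le (hqk.trans_le hqkn') hqkn' (hsphere x) (hsum x)
    (I.wor_le_value x)

/-- Let `q ≥ 2`, `k ≥ 2`, and let `I` be a maximization instance of
`k CSP-q` with `n` variables and `opt(I) ≠ wor(I)` in which every constraint has arity
exactly `k` and every constraint function is balanced `(k−1)`-wise independent. Then:
(1) for every `x`, the sum of `v(I,y)` over all `y` at Hamming distance exactly `1` from
`x` equals `q·k·E[v(I,X)] + ((q−1)·n − q·k)·v(I,x)`;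
(2) every local optimum `x` with respect to `B¹` satisfies `v(I,x) ≥ E[v(I,X)]`;
(3) if `(q−1)·n ≥ q·k`, then for every `x` there is `y ∈ B¹(x)` with
`v(I,y) ≥ (qk/((q−1)n))·E[v(I,X)] + (1 − qk/((q−1)n))·wor(I)`. -/
theorem balanced_Ek_local_search
    (q k n : ℕ) (hq : 2 ≤ q) (hk : 2 ≤ k)
    (I : CSPInstance q k n) (hne : I.opt ≠ I.wor)
    (harity : ∀ i : Fin I.m, I.arity i = k)
    (hbal : ∀ i : Fin I.m, BalancedTwise q (k - 1) (I.P i)) :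
    (∀ x : Fin n → Fin q,
      (∑ y ∈ Finset.univ.filter fun y : Fin n → Fin q => hammingDist x y = 1, I.value y) =
        (q : ℝ) * k * I.avg + (((q : ℝ) - 1) * n - (q : ℝ) * k) * I.value x) ∧
    (∀ x : Fin n → Fin q,
      (∀ y : Fin n → Fin q, hammingDist x y ≤ 1 → I.value y ≤ I.value x) →
        I.avg ≤ I.value x) ∧
    (q * k ≤ (q - 1) * n →
      ∀ x : Fin n → Fin q, ∃ y : Fin n → Fin q, hammingDist x y ≤ 1 ∧
        (q : ℝ) * k / (((q : ℝ) - 1) * n) * I.avg +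
            (1 - (q : ℝ) * k / (((q : ℝ) - 1) * n)) * I.wor ≤ I.value y) :=
  balanced_Ek_local_search_general q k n hq hk I harity hbal
end

section
/- Let k ≥ 1, d ≥ k and n ≥ d be integers. For all integers R ≥ R* > 0, if Γ(R,R*,n,d,k) is nonempty then Δ(R,R*,n,d,k) is nonempty; consequently δ(n,d,k) ≥ γ(n,d,k). -/
/-- `(Ψ, Φ)` is a `(q,p)`-alphabet reduction pair of arrays (ARPA) of strength `k`:
both arrays have `R` rows, `q` columns indexed by `Σ_q` and entries in `Σ_q`;
`Φ` contains at least one row equal to `(0, 1, ..., q-1)` (i.e. the identity);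
every row of `Ψ` takes at most `p` pairwise distinct values; and for every `k` pairwise
distinct columns and every `v ∈ Σ_q^k`, `Ψ` and `Φ` have the same number of rows whose
restriction to these columns equals `v`. -/
def IsARPA (q p k R : ℕ) (Ψ Φ : Fin R → Fin q → Fin q) : Prop :=
  (∃ r, ∀ j : Fin q, Φ r j = j) ∧
  (∀ r, (Finset.univ.image (Ψ r)).card ≤ p) ∧
  (∀ c : Fin k → Fin q, StrictMono c → ∀ v : Fin k → Fin q,
    (Finset.univ.filter fun r => ∀ s, Ψ r (c s) = v s).card =
      (Finset.univ.filter fun r => ∀ s, Φ r (c s) = v s).card)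

/-- `Γ(R, R*, q, p, k)` is nonempty: there is a `(q,p)`-ARPA of strength `k` with `R` rows
in which the row `(0, 1, ..., q-1)` occurs exactly `R*` times in `Φ`. -/
def GammaNonempty (R Rstar q p k : ℕ) : Prop :=
  ∃ Ψ Φ : Fin R → Fin q → Fin q, IsARPA q p k R Ψ Φ ∧
    (Finset.univ.filter fun r => ∀ j : Fin q, Φ r j = j).card = Rstar

/-- `γ(q,p,k)`: the supremum of `R*/R` over all integers `R ≥ R* > 0` such that
`Γ(R, R*, q, p, k)` is nonempty. -/
noncomputable def gammaARPA (q p k : ℕ) : ℝ :=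
  sSup {x : ℝ | ∃ R Rstar : ℕ, 0 < Rstar ∧ Rstar ≤ R ∧ GammaNonempty R Rstar q p k ∧
    x = (Rstar : ℝ) / R}

/-- `(Ψ, Φ)` is an `(n,d)`-cover pair of arrays (CPA) of strength `k`: both arrays have
`R` rows, `n` columns and Boolean entries; `Φ` contains at least one all-ones row; every
row of `Ψ` has at most `d` ones; and for every `k` pairwise distinct columns and every
`v ∈ {0,1}^k`, `Ψ` and `Φ` have the same number of rows whose restriction to these columns
equals `v`. -/
def IsCPA (n d k R : ℕ) (Ψ Φ : Fin R → Fin n → Bool) : Prop :=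
  (∃ r, ∀ j, Φ r j = true) ∧
  (∀ r, (Finset.univ.filter fun j => Ψ r j = true).card ≤ d) ∧
  (∀ c : Fin k → Fin n, StrictMono c → ∀ v : Fin k → Bool,
    (Finset.univ.filter fun r => ∀ s, Ψ r (c s) = v s).card =
      (Finset.univ.filter fun r => ∀ s, Φ r (c s) = v s).card)

/-- `Δ(R, R*, n, d, k)` is nonempty: there is an `(n,d)`-CPA of strength `k` with `R` rows
in which the all-ones row occurs exactly `R*` times in `Φ`. -/
def DeltaNonempty (R Rstar n d k : ℕ) : Prop :=
  ∃ Ψ Φ : Fin R → Fin n → Bool, IsCPA n d k R Ψ Φ ∧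
    (Finset.univ.filter fun r => ∀ j, Φ r j = true).card = Rstar

/-- `δ(n,d,k)`: the supremum of `R*/R` over all integers `R ≥ R* > 0` such that
`Δ(R, R*, n, d, k)` is nonempty. -/
noncomputable def deltaCPA (n d k : ℕ) : ℝ :=
  sSup {x : ℝ | ∃ R Rstar : ℕ, 0 < Rstar ∧ Rstar ≤ R ∧ DeltaNonempty R Rstar n d k ∧
    x = (Rstar : ℝ) / R}

/-!
Read an ARPA entrywise as "is this entry a fixed point?", i.e. map `(Ψ, Φ)` to the Boolean arrays
`r, j ↦ [Ψ r j = j]` and `r, j ↦ [Φ r j = j]`. A row of `Ψ` with at most `d` distinct values has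
at most `d` fixed points, since `Ψ r` is injective on its fixed points; the identity row of `Φ`
becomes an all-ones row, and no other row does. On `k` columns `c` the Boolean pattern of a row is
a function of its pattern in `Σ_q^k`, so equal pattern counts for `(Ψ, Φ)` give equal pattern
counts for the Boolean pair. Hence `Γ(R,R*,n,d,k) ≠ ∅` implies `Δ(R,R*,n,d,k) ≠ ∅`, and the
suprema compare.
-/

open Finset

theorem Finset.card_filter_comp_eq_of_card_filter_eq {ι α β : Type*} [Fintype ι]
    [DecidableEq α] [DecidableEq β] {P Q : ι → α}
    (h : ∀ a, #{i | P i = a} = #{i | Q i = a}) (F : α → β) (b : β) :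
    #{i | F (P i) = b} = #{i | F (Q i) = b} := by
  have hmap : univ.val.map P = univ.val.map Q := Multiset.ext.2 fun a => by
    simp only [Multiset.count_map, eq_comm (a := a)]; exact h a
  have hcount := congrArg (fun m => (m.map F).count b) hmap
  simp only [Multiset.map_map, Multiset.count_map, Function.comp_apply, eq_comm (a := b)] at hcount
  exact hcount

theorem card_filter_apply_eq_self_le_card_image {α : Type*} [Fintype α] [DecidableEq α]
    (f : α → α) : #{a | f a = a} ≤ #(univ.image f) :=
  card_le_card_of_injOn f (fun a _ => mem_image_of_mem f (mem_univ a))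
    fun a ha b hb hab => by
      simp only [coe_filter, mem_univ, true_and, Set.mem_ofPred_eq] at ha hb
      rw [← ha, ← hb, hab]

def fixedPointArray {R q : ℕ} (Ψ : Fin R → Fin q → Fin q) : Fin R → Fin q → Bool :=
  fun r j => decide (Ψ r j = j)

theorem fixedPointArray_row_eq_true {R q : ℕ} (Ψ : Fin R → Fin q → Fin q) (r : Fin R) :
    (∀ j, fixedPointArray Ψ r j = true) ↔ ∀ j, Ψ r j = j := by
  simp [fixedPointArray]

theorem IsARPA.isCPA_fixedPointArray {q p k R : ℕ} {Ψ Φ : Fin R → Fin q → Fin q}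
    (h : IsARPA q p k R Ψ Φ) : IsCPA q p k R (fixedPointArray Ψ) (fixedPointArray Φ) := by
  obtain ⟨⟨r₀, hr₀⟩, hΨ, hcount⟩ := h
  refine ⟨⟨r₀, (fixedPointArray_row_eq_true Φ r₀).2 hr₀⟩, fun r => ?_, fun c hc v => ?_⟩
  · simpa [fixedPointArray] using (card_filter_apply_eq_self_le_card_image (Ψ r)).trans (hΨ r)
  · have hpattern (A : Fin R → Fin q → Fin q) (w : Fin k → Fin q) :
        #{r | (fun s => A r (c s)) = w} = #{r | ∀ s, A r (c s) = w s} := by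
      simp only [funext_iff]
    have hbool := card_filter_comp_eq_of_card_filter_eq
      (P := fun r s => Ψ r (c s)) (Q := fun r s => Φ r (c s))
      (fun w => by rw [hpattern, hpattern, hcount c hc w])
      (fun w s => decide (w s = c s)) v
    convert hbool using 3 <;> simp [funext_iff, fixedPointArray]

theorem GammaNonempty.deltaNonempty {R Rstar q p k : ℕ} (h : GammaNonempty R Rstar q p k) :
    DeltaNonempty R Rstar q p k := by
  obtain ⟨Ψ, Φ, hARPA, hRstar⟩ := h
  exact ⟨fixedPointArray Ψ, fixedPointArray Φ, hARPA.isCPA_fixedPointArray, by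
    simpa only [fixedPointArray_row_eq_true] using hRstar⟩

theorem sSup_ratios_mono {P Q : ℕ → ℕ → Prop} (hPQ : ∀ R Rstar, P R Rstar → Q R Rstar) :
    sSup {x : ℝ | ∃ R Rstar : ℕ, 0 < Rstar ∧ Rstar ≤ R ∧ P R Rstar ∧ x = (Rstar : ℝ) / R} ≤
      sSup {x : ℝ | ∃ R Rstar : ℕ, 0 < Rstar ∧ Rstar ≤ R ∧ Q R Rstar ∧ x = (Rstar : ℝ) / R} := by
  have hQ_nonneg : 0 ≤ sSup {x : ℝ | ∃ R Rstar : ℕ, 0 < Rstar ∧ Rstar ≤ R ∧ Q R Rstar ∧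
      x = (Rstar : ℝ) / R} :=
    Real.sSup_nonneg fun x ⟨R, Rstar, _, _, _, hx⟩ => hx ▸ by positivity
  refine Real.sSup_le (fun x ⟨R, Rstar, hpos, hle, hP, hx⟩ => le_csSup ⟨1, ?_⟩
    ⟨R, Rstar, hpos, hle, hPQ R Rstar hP, hx⟩) hQ_nonneg
  rintro y ⟨R', Rstar', -, hle', -, rfl⟩
  exact div_le_one_of_le₀ (by exact_mod_cast hle') (Nat.cast_nonneg R')

theorem delta_ge_gamma_general (n d k : ℕ) :
    (∀ R Rstar : ℕ, 0 < Rstar → Rstar ≤ R →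
      GammaNonempty R Rstar n d k → DeltaNonempty R Rstar n d k) ∧
    gammaARPA n d k ≤ deltaCPA n d k :=
  ⟨fun _ _ _ _ h => h.deltaNonempty,
    sSup_ratios_mono fun _ _ h => h.deltaNonempty⟩

/-- Let `k ≥ 1`, `d ≥ k` and `n ≥ d`. For all integers `R ≥ R* > 0`,
if `Γ(R,R*,n,d,k)` is nonempty then `Δ(R,R*,n,d,k)` is nonempty; consequently
`δ(n,d,k) ≥ γ(n,d,k)`. -/
theorem delta_ge_gamma (n d k : ℕ) (hk : 1 ≤ k) (hdk : k ≤ d) (hnd : d ≤ n) :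
    (∀ R Rstar : ℕ, 0 < Rstar → Rstar ≤ R →
      GammaNonempty R Rstar n d k → DeltaNonempty R Rstar n d k) ∧
    gammaARPA n d k ≤ deltaCPA n d k :=
  delta_ge_gamma_general n d k
end

section
/- Let q ≥ 2 and k ≥ 2 be integers, let I be an instance of k CSP-q with n variables, and let x, x* ∈ Σ_q^n with Hamming distance d_H(x,x*) = κ > k. For h ∈ {0,...,κ}, let N^h(x*,x) denote the set of vectors y ∈ Σ_q^n such that y_j ∈ {x_j, x*_j} for every j ∈ {1,...,n} and d_H(x,y) = h (so every such y agrees with x at all positions where x and x* agree, N^0(x*,x) = {x} and N^κ(x*,x) = {x*}). Then v(I,x*) = Σ_{h=0}^{k} (−1)^{k−h}·C(κ−1−h, k−h)·Σ_{y ∈ N^h(x*,x)} v(I,y). -/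
open Finset

theorem Int.alternating_sum_range_add_choose_mul_choose (m N r : ℕ) :
    ∑ j ∈ Finset.range (r + 1), (-1 : ℤ) ^ j * ((m + j).choose j) * ((m + 1 + N).choose (r - j)) =
      N.choose r := by
  -- Chu–Vandermonde for `-(m + 1) + (m + 1 + N) = N`, with `C(-(m + 1), j) = (-1)^j C(m + j, j)`
  have vandermonde := Ring.add_choose_eq (r := -((m + 1 : ℕ) : ℤ)) (s := ((m + 1 + N : ℕ) : ℤ)) r
    (Commute.all _ _)
  rw [show -((m + 1 : ℕ) : ℤ) + ((m + 1 + N : ℕ) : ℤ) = (N : ℤ) by push_cast; ring,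
    Ring.choose_natCast, Nat.sum_antidiagonal_eq_sum_range_succ_mk] at vandermonde
  rw [vandermonde]
  refine sum_congr rfl fun j _ => ?_
  dsimp only
  rw [Ring.choose_neg, Ring.choose_natCast,
    show ((m + 1 : ℕ) : ℤ) + j - 1 = ((m + j : ℕ) : ℤ) by push_cast; ring, Ring.choose_natCast,
    Units.smul_def, Int.coe_negOnePow_natCast, smul_eq_mul]

theorem Int.sum_range_neg_one_pow_choose_mul_choose_eq_ite (κ k t a : ℕ) (hat : a ≤ t) (htk : t ≤ k)
    (hkκ : k < κ) :
    ∑ h ∈ Finset.range (k + 1), (-1 : ℤ) ^ (k - h) * ((κ - 1 - h).choose (k - h)) *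
        (if a ≤ h then ((κ - t).choose (h - a) : ℤ) else 0) =
      if a = t then 1 else 0 := by
  rw [← sum_range_reflect]
  have reindex : ∀ j ∈ Finset.range (k + 1),
      (-1 : ℤ) ^ (k - (k + 1 - 1 - j)) * ((κ - 1 - (k + 1 - 1 - j)).choose (k - (k + 1 - 1 - j))) *
          (if a ≤ k + 1 - 1 - j then ((κ - t).choose (k + 1 - 1 - j - a) : ℤ) else 0) =
        if j ≤ k - a then (-1 : ℤ) ^ j * ((κ - 1 - k + j).choose j) *
          ((κ - 1 - k + 1 + (k - t)).choose (k - a - j)) else 0 := by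
    intro j hj
    have hjk : j ≤ k := Nat.lt_succ_iff.mp (mem_range.mp hj)
    rw [show k + 1 - 1 - j = k - j by omega, Nat.sub_sub_self hjk,
      show κ - 1 - (k - j) = κ - 1 - k + j by omega, show κ - t = κ - 1 - k + 1 + (k - t) by omega]
    by_cases hja : j ≤ k - a
    · rw [if_pos (by omega), if_pos hja, show k - j - a = k - a - j by omega]
    · rw [if_neg (by omega), if_neg hja, mul_zero]
  rw [sum_congr rfl reindex, ← sum_filter,
    show (Finset.range (k + 1)).filter (· ≤ k - a) = Finset.range (k - a + 1) by ext; simp; omega,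
    Int.alternating_sum_range_add_choose_mul_choose]
  split_ifs with h
  · simp [h]
  · rw [Nat.choose_eq_zero_of_lt (by omega), Nat.cast_zero]

namespace Finset

variable {α : Type*} [DecidableEq α]

theorem filter_powersetCard_inter_eq {D T A : Finset α} (hAT : A ⊆ T) (h : ℕ) :
    (D.powersetCard h).filter (· ∩ T = A) = ((D \ (T \ A)).powersetCard h).filter (A ⊆ ·) := by
  ext S
  simp only [mem_filter, mem_powersetCard, Finset.ext_iff, mem_inter, mem_sdiff, subset_iff]
  grind

theorem card_filter_powersetCard_inter_eq {D T A : Finset α} (hTD : T ⊆ D) (hAT : A ⊆ T) (h : ℕ) :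
    #((D.powersetCard h).filter (· ∩ T = A)) = if #A ≤ h then (#D - #T).choose (h - #A) else 0 := by
  split_ifs with hAh
  · rw [filter_powersetCard_inter_eq hAT, card_filter_powersetCard_subset _ _ _ ?_ hAh,
      card_sdiff_of_subset (sdiff_subset.trans hTD), card_sdiff_of_subset hAT]
    · have := card_le_card hAT
      have := card_le_card hTD
      congr 1
      omega
    · exact subset_sdiff.2 ⟨hAT.trans hTD, disjoint_sdiff⟩
  · refine card_eq_zero.2 (filter_eq_empty_iff.2 fun S hS hSA => hAh ?_)
    rw [← hSA, ← (mem_powersetCard.1 hS).2]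
    exact card_le_card inter_subset_left

variable {R : Type*} [CommRing R]

theorem apply_eq_alternating_sum_powersetCard {D T : Finset α} {k : ℕ} (g : Finset α → R)
    (hTD : T ⊆ D) (hTk : #T ≤ k) (hkD : k < #D) (hg : ∀ S ⊆ D, g S = g (S ∩ T)) :
    g D = ∑ h ∈ range (k + 1), (-1 : R) ^ (k - h) * ((#D - 1 - h).choose (k - h) : R) *
      ∑ S ∈ D.powersetCard h, g S := by
  have fiberwise (h : ℕ) : ∑ S ∈ D.powersetCard h, g S =
      ∑ A ∈ T.powerset, (#((D.powersetCard h).filter (· ∩ T = A)) : R) * g A := by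
    rw [← sum_fiberwise_of_maps_to (g := (· ∩ T)) fun S _ => mem_powerset.2 inter_subset_right]
    refine sum_congr rfl fun A _ => ?_
    rw [← nsmul_eq_mul, ← sum_const]
    refine sum_congr rfl fun S hS => ?_
    rw [mem_filter, mem_powersetCard] at hS
    rw [hg S hS.1.1, hS.2]
  have coefficient (A : Finset α) (hAT : A ⊆ T) :
      ∑ h ∈ range (k + 1), (-1 : R) ^ (k - h) * ((#D - 1 - h).choose (k - h) : R) *
        (#((D.powersetCard h).filter (· ∩ T = A)) : R) = if A = T then 1 else 0 := by
    simp only [card_filter_powersetCard_inter_eq hTD hAT, Nat.cast_ite, Nat.cast_zero]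
    have hAT_iff : A = T ↔ #A = #T := ⟨congrArg card, fun h => eq_of_subset_of_card_le hAT h.ge⟩
    simp only [hAT_iff]
    simpa only [Int.cast_sum, Int.cast_mul, Int.cast_pow, Int.cast_neg, Int.cast_one, Int.cast_ite,
      Int.cast_natCast, Int.cast_zero] using congrArg (Int.cast : ℤ → R)
        (Int.sum_range_neg_one_pow_choose_mul_choose_eq_ite _ _ _ _ (card_le_card hAT) hTk hkD)
  calc g D = g T := by rw [hg D subset_rfl, inter_eq_right.2 hTD]
    _ = ∑ A ∈ T.powerset, (if A = T then 1 else 0) * g A := by simp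
    _ = ∑ A ∈ T.powerset, (∑ h ∈ range (k + 1), (-1 : R) ^ (k - h) *
          ((#D - 1 - h).choose (k - h) : R) * (#((D.powersetCard h).filter (· ∩ T = A)) : R)) *
          g A := sum_congr rfl fun A hA => by rw [coefficient A (mem_powerset.1 hA)]
    _ = _ := by
      simp_rw [fiberwise, mul_sum, sum_mul]
      rw [sum_comm]
      simp only [mul_assoc]

section Piecewise

variable {ι β : Type*} [Fintype ι] [DecidableEq ι] [DecidableEq β]

theorem filter_ne_piecewise {x y : ι → β} {S : Finset ι} (hS : S ⊆ ({j | x j ≠ y j} : Finset ι)) :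
    ({j | x j ≠ S.piecewise y x j} : Finset ι) = S := by
  ext j
  by_cases hj : j ∈ S
  · simpa [hj] using (mem_filter.1 (hS hj)).2
  · simp [hj]

theorem piecewise_filter_ne {x y z : ι → β} (hz : ∀ j, z j = x j ∨ z j = y j) :
    ({j | x j ≠ z j} : Finset ι).piecewise y x = z := by
  funext j
  by_cases hj : x j = z j <;> rcases hz j with h | h <;> simp_all

theorem sum_filter_hammingDist_eq_sum_powersetCard {M : Type*} [Fintype β] [AddCommMonoid M]
    (x y : ι → β) (F : (ι → β) → M) (h : ℕ)
    [DecidablePred fun z : ι → β => (∀ j, z j = x j ∨ z j = y j) ∧ hammingDist x z = h] :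
    ∑ z ∈ univ.filter (fun z : ι → β => (∀ j, z j = x j ∨ z j = y j) ∧ hammingDist x z = h), F z =
      ∑ S ∈ ({j | x j ≠ y j} : Finset ι).powersetCard h, F (S.piecewise y x) := by
  refine sum_nbij' (fun z => ({j | x j ≠ z j} : Finset ι)) (fun S => S.piecewise y x)
    ?_ ?_ ?_ ?_ ?_
  · intro z hz
    rw [mem_filter] at hz
    refine mem_powersetCard.2 ⟨fun j hj => mem_filter.2 ⟨mem_univ j, ?_⟩, hz.2.2⟩
    replace hj := (mem_filter.1 hj).2
    rcases hz.2.1 j with h | h <;> simp_all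
  · intro S hS
    rw [mem_powersetCard] at hS
    refine mem_filter.2 ⟨mem_univ _, fun j => ?_, ?_⟩
    · by_cases hj : j ∈ S <;> simp [hj]
    · rw [hammingDist, filter_ne_piecewise hS.1, hS.2]
  · intro z hz
    exact piecewise_filter_ne (mem_filter.1 hz).2.1
  · intro S hS
    exact filter_ne_piecewise (mem_powersetCard.1 hS).1
  · intro z hz
    rw [piecewise_filter_ne (mem_filter.1 hz).2.1]

end Piecewise

end Finset

namespace CSPInstance

theorem value_piecewise_eq_alternating_sum {q k n : ℕ} (I : CSPInstance q k n)
    (D : Finset (Fin n)) (hkD : k < #D) (y z : Fin n → Fin q) :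
    I.value (D.piecewise y z) = ∑ h ∈ range (k + 1),
      (-1 : ℝ) ^ (k - h) * ((#D - 1 - h).choose (k - h) : ℝ) *
        ∑ S ∈ D.powersetCard h, I.value (S.piecewise y z) := by
  have constraint (i : Fin I.m) : I.P i (fun s => D.piecewise y z (I.idx i s)) =
      ∑ h ∈ range (k + 1), (-1 : ℝ) ^ (k - h) * ((#D - 1 - h).choose (k - h) : ℝ) *
        ∑ S ∈ D.powersetCard h, I.P i (fun s => S.piecewise y z (I.idx i s)) := by
    set U := univ.image (I.idx i)
    refine apply_eq_alternating_sum_powersetCard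
      (fun S => I.P i fun s => S.piecewise y z (I.idx i s)) (T := D ∩ U) inter_subset_left ?_ hkD
      fun S hSD => ?_
    · calc #(D ∩ U) ≤ #U := card_le_card inter_subset_right
        _ ≤ I.arity i := card_image_le.trans (card_fin _).le
        _ ≤ k := I.arity_le i
    · rw [← inter_assoc, inter_eq_left.2 hSD]
      congr 1
      funext s
      have hs : I.idx i s ∈ U := mem_image_of_mem _ (mem_univ s)
      by_cases hsS : I.idx i s ∈ S <;> simp [hsS, hs]
  unfold value
  simp_rw [constraint, mul_sum]
  rw [sum_comm]
  refine sum_congr rfl fun h _ => ?_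
  rw [sum_comm]
  exact sum_congr rfl fun S _ => sum_congr rfl fun i _ => mul_left_comm _ _ _

end CSPInstance

theorem value_as_combination_over_ball_general
    (q k n κ : ℕ)
    (I : CSPInstance q k n) (x xstar : Fin n → Fin q)
    (hκ : hammingDist x xstar = κ) (hkκ : k < κ) :
    I.value xstar =
      ∑ h ∈ Finset.range (k + 1),
        (-1 : ℝ) ^ (k - h) * (Nat.choose (κ - 1 - h) (k - h) : ℝ) *
          ∑ y ∈ Finset.univ.filter (fun y : Fin n → Fin q =>
              (∀ j, y j = x j ∨ y j = xstar j) ∧ hammingDist x y = h),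
            I.value y := by
  have hD : #({j | x j ≠ xstar j} : Finset (Fin n)) = κ := hκ
  have expansion := I.value_piecewise_eq_alternating_sum _ (hD ▸ hkκ) xstar x
  rw [piecewise_filter_ne fun j => Or.inr rfl, hD] at expansion
  rw [expansion]
  refine sum_congr rfl fun h _ => ?_
  rw [sum_filter_hammingDist_eq_sum_powersetCard]

/-- Let `q ≥ 2`, `k ≥ 2`, let `I` be an instance of `k CSP-q` with `n`
variables, and let `x, x* ∈ Σ_q^n` with Hamming distance `d_H(x, x*) = κ > k`. For
`h ∈ {0, ..., κ}`, `N^h(x*,x)` denotes the set of `y ∈ Σ_q^n` such that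
`y j ∈ {x j, x* j}` for every `j` and `d_H(x, y) = h`. Then
`v(I,x*) = Σ_{h=0}^{k} (−1)^{k−h}·C(κ−1−h, k−h)·Σ_{y ∈ N^h(x*,x)} v(I,y)`. -/
theorem value_as_combination_over_ball
    (q k n κ : ℕ) (hq : 2 ≤ q) (hk : 2 ≤ k)
    (I : CSPInstance q k n) (x xstar : Fin n → Fin q)
    (hκ : hammingDist x xstar = κ) (hkκ : k < κ) :
    I.value xstar =
      ∑ h ∈ Finset.range (k + 1),
        (-1 : ℝ) ^ (k - h) * (Nat.choose (κ - 1 - h) (k - h) : ℝ) *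
          ∑ y ∈ Finset.univ.filter (fun y : Fin n → Fin q =>
              (∀ j, y j = x j ∨ y j = xstar j) ∧ hammingDist x y = h),
            I.value y :=
  value_as_combination_over_ball_general q k n κ I x xstar hκ hkκ
end
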